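/- A finite abelian group is mixable if and only if it is a 2-group. -/

import Mathlib

open scoped Classical

/-- The distribution of the random subproduct `g 0 ^ ε 0 * ⋯ * g (k-1) ^ ε (k-1)`,
where `ε i` are independent Bernoulli variables with parameters `p i`. -/
noncomputable def subprodDist {G : Type*} [Group G] {k : ℕ} (g : Fin k → G)
    (p : Fin k → ℝ) (a : G) : ℝ :=
  ∑ ε : Fin k → Bool,
    (∏ i : Fin k, if ε i then p i else 1 - p i) *
      (if (List.ofFn fun i => if ε i then g i else 1).prod = a then 1 else 0)

/-- `(g, p)` is a mixing sequence: valid probabilities whose random subproduct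
is uniform on `G`. -/
def IsMixingSeq {G : Type*} [Group G] {k : ℕ} (g : Fin k → G) (p : Fin k → ℝ) : Prop :=
  (∀ i, 0 ≤ p i ∧ p i ≤ 1) ∧ ∀ a : G, subprodDist g p a = 1 / (Nat.card G : ℝ)

/-- A group is mixable if it admits a mixing sequence. -/
def Mixable (G : Type*) [Group G] : Prop :=
  ∃ (k : ℕ) (g : Fin k → G) (p : Fin k → ℝ), IsMixingSeq g p

/-- The mixing length of a group: minimal length of a mixing sequence. -/
noncomputable def mixlen (G : Type*) [Group G] : ℕ :=
  sInf {k | ∃ (g : Fin k → G) (p : Fin k → ℝ), IsMixingSeq g p}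

/-!
If `|G| = 2ⁿ`, choose `t` of order 2; by induction `G ⧸ ⟨t⟩` has `n` elements whose subproducts
enumerate it bijectively, and lifting them and prepending `t` does the same for `G`. Fair coins
then make the random subproduct uniform.

Conversely, the Fourier transform of the subproduct distribution at a character `ψ` is
`∏ i, (1 - pᵢ + pᵢ ψ(gᵢ))`. For a uniform distribution and `ψ ≠ 1` it vanishes, so some
`ψ(gᵢ) = (pᵢ - 1) / pᵢ` is a nonpositive real. If `|G|` has an odd prime factor, a character
with values in the odd-order roots of unity exists, and none of those is a nonpositive real.
-/

section Subprod

variable {M : Type*} [Monoid M] {k : ℕ}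

def subprod (g : Fin k → M) (ε : Fin k → Bool) : M :=
  (List.ofFn fun i => if ε i then g i else 1).prod

theorem subprod_cons (t : M) (g : Fin k → M) (ε : Fin (k + 1) → Bool) :
    subprod (Fin.cons t g : Fin (k + 1) → M) ε =
      (if ε 0 then t else 1) * subprod g (Fin.tail ε) := by
  simp only [subprod, List.ofFn_succ, List.prod_cons, Fin.cons_zero, Fin.cons_succ]
  rfl

theorem map_subprod {N : Type*} [Monoid N] (f : M →* N) (g : Fin k → M) (ε : Fin k → Bool) :
    f (subprod g ε) = subprod (f ∘ g) ε := by
  simp only [subprod, map_list_prod, List.map_ofFn, Function.comp_def, apply_ite f, map_one]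

theorem subprod_eq_prod {M : Type*} [CommMonoid M] (g : Fin k → M) (ε : Fin k → Bool) :
    subprod g ε = ∏ i, if ε i then g i else 1 :=
  List.prod_ofFn

end Subprod

theorem injective_subprod_cons_out {G : Type*} [Group G] {N : Subgroup G} [N.Normal] {n : ℕ}
    {q : Fin n → G ⧸ N} (hq : (subprod q).Injective) {t : G} (htN : t ∈ N) (ht : t ≠ 1) :
    (subprod (Fin.cons t fun i => (q i).out : Fin (n + 1) → G)).Injective := by
  have hmk : ∀ ε, (QuotientGroup.mk' N) (subprod (Fin.cons t fun i => (q i).out) ε) =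
      subprod q (Fin.tail ε) := by
    intro ε
    have hlift : (QuotientGroup.mk' N ∘ fun i => (q i).out) = q := funext fun i => (q i).out_eq'
    rw [subprod_cons, map_mul, map_subprod, hlift, apply_ite (QuotientGroup.mk' N),
      QuotientGroup.mk'_apply N t, (QuotientGroup.eq_one_iff t).mpr htN, map_one, ite_self,
      one_mul]
  intro ε ε' h
  have htail : Fin.tail ε = Fin.tail ε' := hq (by rw [← hmk, ← hmk, h])
  rw [subprod_cons, subprod_cons, htail, mul_left_inj] at h
  have hhead : ε 0 = ε' 0 := by
    revert h
    cases ε 0 <;> cases ε' 0 <;> simp [ht, ht.symm]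
  rw [← Fin.cons_self_tail ε, ← Fin.cons_self_tail ε', hhead, htail]

theorem exists_bijective_subprod_of_card_eq_two_pow {G : Type*} [CommGroup G] [Finite G] {n : ℕ}
    (hG : Nat.card G = 2 ^ n) : ∃ g : Fin n → G, (subprod g).Bijective := by
  induction n generalizing G with
  | zero =>
    have : Subsingleton G := (Nat.card_eq_one_iff_unique.mp hG).1
    exact ⟨Fin.elim0, fun ε ε' _ => Subsingleton.elim ε ε',
      fun _ => ⟨Fin.elim0, Subsingleton.elim _ _⟩⟩
  | succ n ih =>
    have : Fact (Nat.Prime 2) := ⟨Nat.prime_two⟩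
    obtain ⟨t, ht⟩ :=
      exists_prime_orderOf_dvd_card' (G := G) 2 (hG ▸ dvd_pow_self 2 n.succ_ne_zero)
    have hQ : Nat.card (G ⧸ Subgroup.zpowers t) = 2 ^ n := by
      have := (Subgroup.zpowers t).card_eq_card_quotient_mul_card_subgroup
      rw [Nat.card_zpowers, ht, hG, pow_succ] at this
      omega
    obtain ⟨q, hq⟩ := ih hQ
    refine ⟨_, (Nat.bijective_iff_injective_and_card _).mpr
      ⟨injective_subprod_cons_out hq.injective (Subgroup.mem_zpowers t) ?_, ?_⟩⟩
    · rintro rfl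
      simp at ht
    · simp [hG]

theorem isMixingSeq_half_of_bijective {G : Type*} [Group G] {n : ℕ} {g : Fin n → G}
    (hg : (subprod g).Bijective) : IsMixingSeq g fun _ => 1 / 2 := by
  have hG : Nat.card G = 2 ^ n := by simp [← Nat.card_eq_of_bijective _ hg]
  refine ⟨fun _ => by norm_num, fun a => ?_⟩
  have hweight : ∀ ε : Fin n → Bool,
      (∏ i, if ε i then (1 / 2 : ℝ) else 1 - 1 / 2) = 1 / 2 ^ n := fun ε => by norm_num
  have : Fintype G := Fintype.ofBijective _ hg
  simp only [subprodDist, hweight]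
  change ∑ ε, 1 / 2 ^ n * (if subprod g ε = a then 1 else 0) = _
  rw [hg.sum_comp fun x => 1 / 2 ^ n * if x = a then (1 : ℝ) else 0, hG]
  simp

theorem sum_subprodDist_mul_hom {G : Type*} [Group G] [Fintype G] {k : ℕ} (g : Fin k → G)
    (p : Fin k → ℝ) (ψ : G →* ℂ) :
    ∑ a, (subprodDist g p a : ℂ) * ψ a = ∏ i, (1 - p i + p i * ψ (g i)) := by
  calc ∑ a, (subprodDist g p a : ℂ) * ψ a
      = ∑ ε : Fin k → Bool, (∏ i, if ε i then (p i : ℂ) else 1 - p i) * ψ (subprod g ε) := by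
        push_cast [subprodDist, apply_ite Complex.ofReal, Finset.sum_mul, mul_assoc]
        rw [Finset.sum_comm]
        simp [subprod]
    _ = ∑ ε : Fin k → Bool, ∏ i, if ε i then (p i : ℂ) * ψ (g i) else 1 - p i := by
        simp only [map_subprod, subprod_eq_prod, ← Finset.prod_mul_distrib, Function.comp_apply]
        congr! 2 with ε - i
        split <;> simp
    _ = ∏ i, (1 - p i + p i * ψ (g i)) := by
        rw [← Fintype.prod_sum fun i (b : Bool) => if b then (p i : ℂ) * ψ (g i) else 1 - p i]
        simp [add_comm]

theorem exists_hom_apply_eq_nonpos_of_isMixingSeq {G : Type*} [Group G] [Finite G] {k : ℕ}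
    {g : Fin k → G} {p : Fin k → ℝ} (h : IsMixingSeq g p) {ψ : G →* ℂ} (hψ : ψ ≠ 1) :
    ∃ i, ∃ r : ℝ, r ≤ 0 ∧ ψ (g i) = r := by
  obtain ⟨hp, hunif⟩ := h
  have := Fintype.ofFinite G
  have hzero : ∏ i, (1 - p i + p i * ψ (g i)) = 0 := by
    rw [← sum_subprodDist_mul_hom]
    simp only [hunif, ← Finset.mul_sum, sum_hom_units_eq_zero ψ hψ, mul_zero]
  obtain ⟨i, -, hi⟩ := Finset.prod_eq_zero_iff.mp hzero
  have hpi : p i ≠ 0 := by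
    rintro h0
    simp [h0] at hi
  refine ⟨i, (p i - 1) / p i, div_nonpos_of_nonpos_of_nonneg (by linarith [hp i]) (hp i).1, ?_⟩
  rw [Complex.ofReal_div, eq_div_iff (Complex.ofReal_ne_zero.mpr hpi)]
  push_cast
  linear_combination hi

theorem not_mixable_of_hom_pow_odd_eq_one {G : Type*} [Group G] [Finite G] {ψ : G →* ℂ}
    (hψ : ψ ≠ 1) {m : ℕ} (hm : Odd m) (hψm : ∀ x, ψ x ^ m = 1) : ¬ Mixable G := by
  rintro ⟨k, g, p, h⟩
  obtain ⟨i, r, hr, hi⟩ := exists_hom_apply_eq_nonpos_of_isMixingSeq h hψ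
  have : r ^ m = 1 := by exact_mod_cast hi ▸ hψm (g i)
  linarith [hm.pow_nonpos hr]

theorem exists_hom_ne_one_pow_odd_eq_one_of_not_isPGroup {G : Type*} [CommGroup G] [Finite G]
    (h : ¬ IsPGroup 2 G) : ∃ ψ : G →* ℂ, ψ ≠ 1 ∧ ∃ m, Odd m ∧ ∀ x, ψ x ^ m = 1 := by
  obtain ⟨s, m, hm, hcard⟩ := Nat.exists_eq_two_pow_mul_odd (Nat.card_pos (α := G)).ne'
  obtain ⟨a, ha⟩ : ∃ a : G, a ^ 2 ^ s ≠ 1 := by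
    by_contra! h'
    exact h fun x => ⟨s, h' x⟩
  have : NeZero (Monoid.exponent G : ℂ) :=
    ⟨Nat.cast_ne_zero.mpr Monoid.exponent_ne_zero_of_finite⟩
  obtain ⟨φ, hφ⟩ := CommGroup.exists_apply_ne_one_of_hasEnoughRootsOfUnity G ℂ ha
  -- raising to the power `2 ^ s` leaves values in the `m`-th roots of unity, as `|G| = 2 ^ s * m`
  refine ⟨(Units.coeHom ℂ).comp (φ ^ 2 ^ s), fun h1 => hφ ?_, m, hm, fun x => ?_⟩
  · ext
    simpa using DFunLike.congr_fun h1 a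
  · rw [MonoidHom.comp_apply, MonoidHom.pow_apply, Units.coeHom_apply, ← Units.val_pow_eq_pow_val,
      ← pow_mul, ← hcard, ← map_pow, pow_card_eq_one', map_one, Units.val_one]

/-- A finite abelian group is mixable iff it is a 2-group. -/
theorem mixable_abelian_iff (G : Type*) [CommGroup G] [Finite G] :
    Mixable G ↔ ∃ n : ℕ, Nat.card G = 2 ^ n := by
  have : Fact (Nat.Prime 2) := ⟨Nat.prime_two⟩
  constructor
  · intro hmix
    by_contra h
    obtain ⟨ψ, hψ, m, hm, hψm⟩ :=
      exists_hom_ne_one_pow_odd_eq_one_of_not_isPGroup (mt IsPGroup.iff_card.mp h)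
    exact not_mixable_of_hom_pow_odd_eq_one hψ hm hψm hmix
  · rintro ⟨n, hG⟩
    obtain ⟨g, hg⟩ := exists_bijective_subprod_of_card_eq_two_pow hG
    exact ⟨n, g, _, isMixingSeq_half_of_bijective hg⟩
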